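/- For each S ∈ r([k]) (nonempty subset of [k]), let X_S ⊆ [0,1]^{r([k])} be a set in the σ-algebra A_S generated by the coordinates indexed by nonempty subsets of S, which is independent from the σ-algebra A_S^* generated by all A_T with T ⊊ S. Then {X_S}_{S ∈ r([k])} is a totally independent system: for any collection S_1, …, S_r of distinct nonempty subsets of [k], Vol(⋂_{i=1}^r X_{S_i}) = ∏_{i=1}^r Vol(X_{S_i}). -/

import Mathlib

/-!
The coordinates of the cube are independent. Peel off a set `S` of the family that is maximal
for inclusion: every other `X_T` is then measurable with respect to the coordinates indexed by
`T' ≠ S`. These split into the proper subsets of `S`, from which `X_S` is independent by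
hypothesis, and the sets not contained in `S`, whose coordinates are independent of everything
generated by the coordinates below `S`, including `X_S` and the first group. Together this makes
`X_S` independent of all coordinates other than `S`, and induction on the family finishes.
-/

open MeasureTheory Set

/-- The index set `r([k])` of nonempty subsets of `[k]`. -/
def NESub (k : ℕ) := {S : Finset (Fin k) // S.Nonempty}

instance (k : ℕ) : Fintype (NESub k) := by unfold NESub; infer_instance

/-- The product Lebesgue probability measure on `[0,1]^{r([k])}`, realized on
`r([k]) → ℝ` as the product of copies of Lebesgue measure restricted to `[0,1]`. -/
noncomputable def cubeMeasure (k : ℕ) : Measure (NESub k → ℝ) :=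
  Measure.pi fun _ => (volume : Measure ℝ).restrict (Icc (0:ℝ) 1)

/-- `𝓐 S`: the σ-algebra on `[0,1]^{r([k])}` generated by the coordinates indexed by the
nonempty subsets of `S`. -/
def coordAlg (k : ℕ) (S : Finset (Fin k)) : MeasurableSpace (NESub k → ℝ) :=
  ⨆ (T : NESub k) (_ : T.1 ⊆ S), MeasurableSpace.comap (fun x => x T) inferInstance

/-- `𝓐* S`: the σ-algebra generated by all `𝓐 T` with `T ⊊ S`, equivalently by the
coordinates indexed by nonempty proper subsets of `S`. -/
def coordAlgStar (k : ℕ) (S : Finset (Fin k)) : MeasurableSpace (NESub k → ℝ) :=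
  ⨆ (T : NESub k) (_ : T.1 ⊂ S), MeasurableSpace.comap (fun x => x T) inferInstance

open ProbabilityTheory MeasurableSpace

section

variable {Ω : Type*} {mΩ : MeasurableSpace Ω} {μ : Measure Ω} [IsProbabilityMeasure μ]

lemma ProbabilityTheory.Indep.sup_right_of_indep_sup {m₁ m₂ m₃ : MeasurableSpace Ω}
    (h₁ : m₁ ≤ mΩ) (h₂ : m₂ ≤ mΩ) (h₃ : m₃ ≤ mΩ)
    (h₁₂ : Indep m₁ m₂ μ) (h : Indep (m₁ ⊔ m₂) m₃ μ) : Indep m₁ (m₂ ⊔ m₃) μ := by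
  have hgen : m₂ ⊔ m₃ = generateFrom (image2 (· ∩ ·) {s | MeasurableSet[m₂] s}
      {s | MeasurableSet[m₃] s}) := by
    refine le_antisymm (sup_le (fun s hs => ?_) fun s hs => ?_) (generateFrom_le ?_)
    · exact measurableSet_generateFrom ⟨s, hs, univ, .univ, inter_univ s⟩
    · exact measurableSet_generateFrom ⟨univ, .univ, s, hs, univ_inter s⟩
    · rintro _ ⟨a, ha, b, hb, rfl⟩
      exact (le_sup_left (b := m₃) _ ha).inter (le_sup_right (a := m₂) _ hb)
  have hpi : IsPiSystem (image2 (· ∩ ·) {s | MeasurableSet[m₂] s}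
      {s | MeasurableSet[m₃] s}) := by
    rintro _ ⟨a, ha, b, hb, rfl⟩ _ ⟨a', ha', b', hb', rfl⟩ -
    exact ⟨a ∩ a', ha.inter ha', b ∩ b', hb.inter hb', by rw [inter_inter_inter_comm]⟩
  refine IndepSets.indep h₁ (sup_le h₂ h₃) (@isPiSystem_measurableSet Ω m₁) hpi
    (@generateFrom_measurableSet Ω m₁).symm hgen ?_
  rw [IndepSets_iff]
  rintro s _ hs ⟨a, ha, b, hb, rfl⟩
  have hsa : MeasurableSet[m₁ ⊔ m₂] (s ∩ a) :=
    (le_sup_left (b := m₂) _ hs).inter (le_sup_right (a := m₁) _ ha)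
  calc μ (s ∩ (a ∩ b)) = μ (s ∩ a ∩ b) := by rw [inter_assoc]
    _ = μ s * μ a * μ b := by
      rw [(Indep_iff _ _ _).1 h _ _ hsa hb, (Indep_iff _ _ _).1 h₁₂ _ _ hs ha]
    _ = μ s * μ (a ∩ b) := by
      rw [mul_assoc, (Indep_iff _ _ _).1 (indep_of_indep_of_le_left h le_sup_right) _ _ ha hb]

lemma ProbabilityTheory.indep_generateFrom_singleton {m : MeasurableSpace Ω} {s : Set Ω}
    (hs : MeasurableSet[mΩ] s) (hm : m ≤ mΩ)
    (h : ∀ t, MeasurableSet[m] t → μ (s ∩ t) = μ s * μ t) :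
    Indep (generateFrom {s}) m μ := by
  refine IndepSets.indep (generateFrom_le (by rintro _ rfl; exact hs)) hm (.singleton s)
    (@isPiSystem_measurableSet Ω m) rfl (@generateFrom_measurableSet Ω m).symm ?_
  rw [IndepSets_iff]
  rintro _ t rfl ht
  exact h t ht

variable {ι : Type*} {m : ι → MeasurableSpace Ω}

lemma ProbabilityTheory.iIndep.indep_biSup_of_indep_biSup_inter (hle : ∀ i, m i ≤ mΩ)
    (hm : iIndep m μ) {M : MeasurableSpace Ω} {s t : Set ι} (hMs : M ≤ ⨆ i ∈ s, m i)
    (h : Indep M (⨆ i ∈ s ∩ t, m i) μ) : Indep M (⨆ i ∈ t, m i) μ := by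
  have hle' : ∀ u : Set ι, ⨆ i ∈ u, m i ≤ mΩ := fun u => iSup₂_le fun i _ => hle i
  have hsplit : ⨆ i ∈ t, m i = (⨆ i ∈ s ∩ t, m i) ⊔ ⨆ i ∈ t \ s, m i := by
    rw [← iSup_union, inter_comm, inter_union_sdiff]
  rw [hsplit]
  refine h.sup_right_of_indep_sup (hMs.trans (hle' s)) (hle' _) (hle' _) ?_
  exact indep_of_indep_of_le_left (indep_iSup_of_disjoint hle hm disjoint_sdiff_right)
    (sup_le hMs (biSup_mono fun i hi => hi.1))

theorem ProbabilityTheory.iIndep.measure_biInter_eq_prod_of_indep_lt [PartialOrder ι]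
    (hle : ∀ i, m i ≤ mΩ) (hm : iIndep m μ) {X : ι → Set Ω}
    (hX : ∀ i, MeasurableSet[⨆ j ≤ i, m j] (X i))
    (hXind : ∀ i, Indep (generateFrom {X i}) (⨆ j < i, m j) μ) (F : Finset ι) :
    μ (⋂ i ∈ F, X i) = ∏ i ∈ F, μ (X i) := by
  classical
  induction F using Finset.strongInduction with | H F ih =>
  rcases F.eq_empty_or_nonempty with rfl | hF
  · simp
  obtain ⟨i, hiF, hmax⟩ := F.exists_maximal hF
  have hind : Indep (generateFrom {X i}) (⨆ j ∈ ({i}ᶜ : Set ι), m j) μ := by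
    refine hm.indep_biSup_of_indep_biSup_inter hle (s := Iic i)
      (generateFrom_le fun _ h => h ▸ hX i) ?_
    rw [← sdiff_eq, Iic_sdiff_right]
    exact hXind i
  -- the maximality of `i` in `F` keeps every other `X j` away from the coordinate `i`
  have hrest : MeasurableSet[⨆ j ∈ ({i}ᶜ : Set ι), m j] (⋂ j ∈ F.erase i, X j) := by
    refine Finset.measurableSet_biInter _ fun j hj => ?_
    have hji : ∀ l, l ≤ j → l ∈ ({i}ᶜ : Set ι) := by
      rintro _ hl rfl
      exact Finset.ne_of_mem_erase hj (le_antisymm (hmax (Finset.mem_of_mem_erase hj) hl) hl)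
    exact (biSup_mono hji : ⨆ l ≤ j, m l ≤ ⨆ l ∈ ({i}ᶜ : Set ι), m l) _ (hX j)
  rw [← Finset.insert_erase hiF, Finset.set_biInter_insert,
    Finset.prod_insert (Finset.notMem_erase _ _),
    (Indep_iff _ _ _).1 hind _ _ (measurableSet_generateFrom rfl) hrest,
    ih _ (Finset.erase_ssubset hiF)]

end

-- `≤` and `<` are `⊆` and `⊂`, so `coordAlg k S.1` and `coordAlgStar k S.1` are the suprema of
-- the coordinate σ-algebras over `T ≤ S` and over `T < S`.
instance (k : ℕ) : PartialOrder (NESub k) := Subtype.partialOrder _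

instance : IsProbabilityMeasure ((volume : Measure ℝ).restrict (Icc (0:ℝ) 1)) :=
  ⟨by simp [Real.volume_Icc]⟩

instance (k : ℕ) : IsProbabilityMeasure (cubeMeasure k) := by
  unfold cubeMeasure; infer_instance

lemma iIndep_cubeMeasure_eval (k : ℕ) :
    iIndep (fun T : NESub k => MeasurableSpace.comap (fun x : NESub k → ℝ => x T) inferInstance)
      (cubeMeasure k) :=
  (iIndepFun_iff_iIndep _ _ _).1 (iIndepFun_pi (X := fun _ => id) fun _ => aemeasurable_id)

/-- Total independence: if for every nonempty `S ⊆ [k]` the set `X_S ⊆ [0,1]^{r([k])}`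
belongs to `𝓐 S` and is independent from `𝓐* S`, then the family `{X_S}` is totally
independent: for distinct `S₁, …, S_r`, `Vol(⋂ᵢ X_{Sᵢ}) = ∏ᵢ Vol(X_{Sᵢ})`. -/
theorem totally_independent_family (k : ℕ) (X : NESub k → Set (NESub k → ℝ))
    (hmeas : ∀ S : NESub k, MeasurableSet[coordAlg k S.1] (X S))
    (hind : ∀ S : NESub k, ∀ B : Set (NESub k → ℝ), MeasurableSet[coordAlgStar k S.1] B →
      cubeMeasure k (X S ∩ B) = cubeMeasure k (X S) * cubeMeasure k B) :
    ∀ (r : ℕ) (S : Fin r → NESub k), Function.Injective S →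
      cubeMeasure k (⋂ i, X (S i)) = ∏ i, cubeMeasure k (X (S i)) := by
  classical
  intro r S hS
  have hle (T : NESub k) : MeasurableSpace.comap (fun x : NESub k → ℝ => x T) inferInstance ≤
      (inferInstance : MeasurableSpace (NESub k → ℝ)) :=
    (measurable_pi_apply T).comap_le
  have hXind (T : NESub k) : Indep (generateFrom {X T}) (coordAlgStar k T.1) (cubeMeasure k) :=
    indep_generateFrom_singleton (iSup₂_le (fun U _ => hle U) _ (hmeas T))
      (iSup₂_le fun U _ => hle U) (hind T)
  have key := (iIndep_cubeMeasure_eval k).measure_biInter_eq_prod_of_indep_lt hle hmeas hXind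
    (Finset.univ.image S)
  rw [Finset.set_biInter_finset_image, Finset.prod_image (fun i _ j _ h => hS h)] at key
  simpa using key
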